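/- Let α = α₁ + i α₂ ∈ ℂ with α ≠ 0 (α₁, α₂ ∈ ℝ). Define x₁, x₂ : ℝ → ℝ by x₁(t) = |α|^{-2} ( α₂ sinh(α₂ t) sin(α₁ t) − α₁ cosh(α₂ t) cos(α₁ t) ) and x₂(t) = |α|^{-2} ( α₂ sinh(α₂ t) cos(α₁ t) + α₁ cosh(α₂ t) sin(α₁ t) ). Then the map ℝ → ℝ², t ↦ (x₁(t), x₂(t)), is injective if and only if α₁ = 0. -/

import Mathlib

/-!
The first coordinate `x₁` is even and the second `x₂` is odd, so `t` and `-t` have the same image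
whenever `x₂ t = 0`: injectivity rules out zeros of `x₂` other than `0`. If `α₁ ≠ 0`, then
`|α|² x₂` equals `α₁ cosh (α₂ s)` at `s = π / (2 α₁)` and `-α₁ cosh (3 α₂ s)` at `3 s`, so `x₂`
vanishes between `s` and `3 s`, away from `0`. If `α₁ = 0`, then `x₂ t = sinh (α₂ t) / α₂` is
already injective.
-/

open Real Function Set

lemma eq_zero_of_injective_of_even_of_odd {α β : Type*} [NegZeroClass β] {f : ℝ → α} {g : ℝ → β}
    (hf : f.Even) (hg : g.Odd) (hinj : Injective fun t => (f t, g t)) {t : ℝ} (ht : g t = 0) :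
    t = 0 := by
  have : -t = t := hinj (by simp only [hf t, hg t, ht, neg_zero])
  linarith

lemma exists_ne_zero_sinh_mul_cos_add_cosh_mul_sin_eq_zero (a b : ℝ) (ha : a ≠ 0) :
    ∃ t ≠ 0, b * sinh (b * t) * cos (a * t) + a * cosh (b * t) * sin (a * t) = 0 := by
  set g : ℝ → ℝ := fun t => b * sinh (b * t) * cos (a * t) + a * cosh (b * t) * sin (a * t)
  set s := π / (2 * a)
  have hs : s ≠ 0 := div_ne_zero pi_ne_zero (mul_ne_zero two_ne_zero ha)
  have has : a * s = π / 2 := by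
    simp only [s]
    field_simp
  have hgs : g s = a * cosh (b * s) := by simp [g, has]
  have hg3s : g (3 * s) = -(a * cosh (b * (3 * s))) := by
    have : a * (3 * s) = π / 2 + π := by rw [mul_left_comm, has]; ring
    simp [g, this, cos_add_pi, sin_add_pi]
  have hzero : (0 : ℝ) ∈ uIcc (g s) (g (3 * s)) := by
    have := cosh_pos (b * s)
    have := cosh_pos (b * (3 * s))
    rw [hgs, hg3s, mem_uIcc]
    rcases le_total 0 a with h | h
    · exact Or.inr ⟨by nlinarith, by nlinarith⟩
    · exact Or.inl ⟨by nlinarith, by nlinarith⟩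
  obtain ⟨t, ht, hgt⟩ := intermediate_value_uIcc (by fun_prop) hzero
  refine ⟨t, ?_, hgt⟩
  rintro rfl
  rcases mem_uIcc.1 ht with h | h <;> exact hs (by linarith [h.1, h.2])

/-- The final embeddedness computation in the uniqueness of the helicoid: the planar
curve coming from the Weierstrass representation with Gauss map `e^{αz}` is injective
if and only if `α₁ = Re α = 0`. -/
theorem stmt4 (α₁ α₂ : ℝ) (hα : (α₁ : ℂ) + (α₂ : ℂ) * Complex.I ≠ 0)
    (x₁ x₂ : ℝ → ℝ)
    (hx₁ : ∀ t, x₁ t = (α₁ ^ 2 + α₂ ^ 2)⁻¹ *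
      (α₂ * Real.sinh (α₂ * t) * Real.sin (α₁ * t) -
        α₁ * Real.cosh (α₂ * t) * Real.cos (α₁ * t)))
    (hx₂ : ∀ t, x₂ t = (α₁ ^ 2 + α₂ ^ 2)⁻¹ *
      (α₂ * Real.sinh (α₂ * t) * Real.cos (α₁ * t) +
        α₁ * Real.cosh (α₂ * t) * Real.sin (α₁ * t))) :
    Function.Injective (fun t : ℝ => (x₁ t, x₂ t)) ↔ α₁ = 0 := by
  have hx₁_even : x₁.Even := fun t => by
    simp only [hx₁, mul_neg, sinh_neg, cosh_neg, sin_neg, cos_neg]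
    ring
  have hx₂_odd : x₂.Odd := fun t => by
    simp only [hx₂, mul_neg, sinh_neg, cosh_neg, sin_neg, cos_neg]
    ring
  constructor
  · intro hinj
    by_contra hα₁
    obtain ⟨t, ht, hzero⟩ := exists_ne_zero_sinh_mul_cos_add_cosh_mul_sin_eq_zero α₁ α₂ hα₁
    exact ht (eq_zero_of_injective_of_even_of_odd hx₁_even hx₂_odd hinj
      (by rw [hx₂, hzero, mul_zero]))
  · rintro rfl
    have hα₂ : α₂ ≠ 0 := by
      rintro rfl
      simp at hα
    have hx₂_eq : x₂ = fun t => (α₂ ^ 2)⁻¹ * (α₂ * sinh (α₂ * t)) := by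
      funext t
      simp [hx₂]
    refine Injective.of_comp (f := Prod.snd) ?_
    show Injective x₂
    rw [hx₂_eq]
    exact (mul_right_injective₀ (by positivity)).comp
      ((mul_right_injective₀ hα₂).comp (sinh_injective.comp (mul_right_injective₀ hα₂)))
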